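/- Let m ≥ 1 be an integer and let p ∈ (0,1) be real. Then (m/λ) · Σ_{k≥1} (1 - p/m)^k · B(1 + 1/λ, k) tends to 0 as λ → ∞. Consequently 1 - (m/λ) · Σ_{k≥1} (1 - p/m)^k · B(1 + 1/λ, k) tends to 1 as λ → ∞. -/
import Mathlib


open MeasureTheory Real

/-- Euler beta function `B(a,b) = ∫₀¹ u^(a-1) (1-u)^(b-1) du`. -/
noncomputable def betaFn (a b : ℝ) : ℝ := ∫ u in (0:ℝ)..1, u ^ (a - 1) * (1 - u) ^ (b - 1)

lemma betaFn_nonneg {a b : ℝ} : 0 ≤ betaFn a b := by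
  apply intervalIntegral.integral_nonneg (by norm_num)
  intro u hu
  exact mul_nonneg (Real.rpow_nonneg hu.1 _) (Real.rpow_nonneg (by linarith [hu.2]) _)

lemma betaFn_le_one {a b : ℝ} (ha : 1 ≤ a) (hb : 1 ≤ b) : betaFn a b ≤ 1 := by
  have h := intervalIntegral.norm_integral_le_of_norm_le_const (C := 1)
    (f := fun u : ℝ => u ^ (a-1) * (1-u)^(b-1)) (a := 0) (b := 1) ?_
  · have habs : |betaFn a b| ≤ 1 := by
      simpa [betaFn] using h
    linarith [(abs_le.mp habs).2]
  · intro u hu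
    rw [Set.uIoc_of_le (by norm_num : (0:ℝ) ≤ 1)] at hu
    have h0 : 0 < u := hu.1
    have h1 : u ≤ 1 := hu.2
    have hA := Real.rpow_le_one h0.le h1 (by linarith : (0:ℝ) ≤ a - 1)
    have hB := Real.rpow_le_one (by linarith : (0:ℝ) ≤ 1 - u) (by linarith)
      (by linarith : (0:ℝ) ≤ b - 1)
    have hA0 := Real.rpow_nonneg h0.le (a-1)
    have hB0 := Real.rpow_nonneg (show (0:ℝ) ≤ 1-u by linarith) (b-1)
    rw [Real.norm_eq_abs, abs_mul, abs_of_nonneg hA0, abs_of_nonneg hB0]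
    nlinarith

theorem stmt7 (m : ℕ) (hm : 1 ≤ m) (p : ℝ) (hp : 0 < p) (hp1 : p < 1) :
    Filter.Tendsto (fun l : ℝ => ((m:ℝ)/l) * ∑' k : ℕ, (1 - p/m)^(k+1) * betaFn (1 + 1/l) (k+1))
      Filter.atTop (nhds 0) ∧
    Filter.Tendsto (fun l : ℝ => 1 - ((m:ℝ)/l) * ∑' k : ℕ, (1 - p/m)^(k+1) * betaFn (1 + 1/l) (k+1))
      Filter.atTop (nhds 1) := by
  have hm0 : (0:ℝ) < m := by exact_mod_cast Nat.lt_of_lt_of_le Nat.zero_lt_one hm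
  have hm1 : (1:ℝ) ≤ m := by exact_mod_cast hm
  set r : ℝ := 1 - p/m with hr
  have hpm0 : 0 < p/m := div_pos hp hm0
  have hpm1 : p/m ≤ p := by
    rw [div_le_iff₀ hm0]; nlinarith
  have hr0 : 0 ≤ r := by simp only [hr]; linarith
  have hr1 : r < 1 := by simp only [hr]; linarith
  set C : ℝ := 1/(1-r) with hC
  have hgeo : Summable (fun k : ℕ => r^(k+1)) := by
    have := (summable_geometric_of_lt_one hr0 hr1)
    exact (summable_nat_add_iff 1).mpr this
  have key : ∀ l : ℝ, 1 ≤ l →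
      0 ≤ ((m:ℝ)/l) * ∑' k : ℕ, r^(k+1) * betaFn (1 + 1/l) (k+1) ∧
      ((m:ℝ)/l) * ∑' k : ℕ, r^(k+1) * betaFn (1 + 1/l) (k+1) ≤ (m:ℝ)/l * C := by
    intro l hl
    have hl0 : 0 < l := lt_of_lt_of_le one_pos hl
    have hinv : (0:ℝ) ≤ 1/l := by positivity
    have hbeta : ∀ k : ℕ, 0 ≤ betaFn (1 + 1/l) (k+1) ∧ betaFn (1 + 1/l) (k+1) ≤ 1 := by
      intro k
      refine ⟨betaFn_nonneg, betaFn_le_one (by linarith) ?_⟩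
      have : (1:ℝ) ≤ (k+1 : ℕ) := by exact_mod_cast Nat.succ_le_succ (Nat.zero_le k)
      exact_mod_cast this
    have hterm_nonneg : ∀ k : ℕ, 0 ≤ r^(k+1) * betaFn (1 + 1/l) (k+1) := fun k =>
      mul_nonneg (pow_nonneg hr0 _) (hbeta k).1
    have hterm_le : ∀ k : ℕ, r^(k+1) * betaFn (1 + 1/l) (k+1) ≤ r^(k+1) := fun k => by
      nlinarith [(hbeta k).1, (hbeta k).2, pow_nonneg hr0 (k+1)]
    have hsummable : Summable (fun k : ℕ => r^(k+1) * betaFn (1 + 1/l) (k+1)) :=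
      Summable.of_nonneg_of_le hterm_nonneg hterm_le hgeo
    have hS0 : 0 ≤ ∑' k : ℕ, r^(k+1) * betaFn (1 + 1/l) (k+1) :=
      tsum_nonneg hterm_nonneg
    have hSC : ∑' k : ℕ, r^(k+1) * betaFn (1 + 1/l) (k+1) ≤ C := by
      calc ∑' k : ℕ, r^(k+1) * betaFn (1 + 1/l) (k+1)
          ≤ ∑' k : ℕ, r^(k+1) := Summable.tsum_le_tsum hterm_le hsummable hgeo
        _ ≤ ∑' k : ℕ, r^k := Summable.tsum_le_tsum (fun k => by
              calc r^(k+1) = r^k * r := by ring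
                _ ≤ r^k * 1 := by nlinarith [pow_nonneg hr0 k]
                _ = r^k := by ring) hgeo (summable_geometric_of_lt_one hr0 hr1)
        _ = C := by rw [tsum_geometric_of_lt_one hr0 hr1, hC, one_div]
    have hml : (0:ℝ) ≤ (m:ℝ)/l := by positivity
    exact ⟨mul_nonneg hml hS0, mul_le_mul_of_nonneg_left hSC hml⟩
  have hglim : Filter.Tendsto (fun l : ℝ => (m:ℝ)/l * C) Filter.atTop (nhds 0) := by
    have h1 : Filter.Tendsto (fun l : ℝ => ((m:ℝ)*C)/l) Filter.atTop (nhds 0) :=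
      Filter.Tendsto.div_atTop tendsto_const_nhds Filter.tendsto_id
    have : (fun l : ℝ => (m:ℝ)/l * C) = fun l : ℝ => ((m:ℝ)*C)/l := by
      funext l; ring
    rw [this]; exact h1
  have h1 : Filter.Tendsto (fun l : ℝ => ((m:ℝ)/l) * ∑' k : ℕ, (1 - p/m)^(k+1) * betaFn (1 + 1/l) (k+1))
      Filter.atTop (nhds 0) := by
    apply squeeze_zero' ?_ ?_ hglim
    · filter_upwards [Filter.eventually_ge_atTop (1:ℝ)] with l hl
      exact (key l hl).1
    · filter_upwards [Filter.eventually_ge_atTop (1:ℝ)] with l hl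
      exact (key l hl).2
  refine ⟨h1, ?_⟩
  have := Filter.Tendsto.sub (tendsto_const_nhds (x := (1:ℝ)) (f := Filter.atTop)) h1
  simpa using this
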